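/- arXiv:2011.07569 — 2 statements merged into one kernel-verified Lean document; each statement's English description precedes it below -/
import Mathlib

section
/- If M is an irreducible Metzler matrix, then r = s(M) is a simple eigenvalue of M, and there exists a corresponding eigenvector all of whose entries are strictly positive. -/
open Matrix

/-- The spectral abscissa: the largest real part among the (complex) eigenvalues. -/
noncomputable def spectralAbscissa {α : Type*} [Fintype α] [DecidableEq α]
    (M : Matrix α α ℝ) : ℝ :=
  sSup ((fun z : ℂ => z.re) '' spectrum ℂ (M.map Complex.ofReal))

/-- The spectral radius of a real matrix. -/
noncomputable def specRad {α : Type*} [Fintype α] [DecidableEq α]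
    (M : Matrix α α ℝ) : ℝ :=
  sSup ((fun z : ℂ => ‖z‖) '' spectrum ℂ (M.map Complex.ofReal))

/-- Irreducibility of a matrix: the directed graph on its nonzero entries is strongly
connected, phrased as: no nonempty proper subset of indices is closed. -/
def Irred {α : Type*} [Fintype α] [DecidableEq α] (M : Matrix α α ℝ) : Prop :=
  ∀ S : Finset α, S.Nonempty → S ≠ Finset.univ → ∃ i ∈ S, ∃ j, j ∉ S ∧ M i j ≠ 0

/-- A Metzler matrix: all off-diagonal entries are nonnegative. -/
def Metzler {α : Type*} [Fintype α] [DecidableEq α] (M : Matrix α α ℝ) : Prop :=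
  ∀ i j, i ≠ j → 0 ≤ M i j

/-!
Adding a multiple of the identity makes `M` entrywise nonnegative without changing its
eigenvectors or its irreducibility, so the work is done for a nonnegative irreducible `A`.
The Collatz–Wielandt number `r`, the largest `t` with `t • u ≤ A u` for some nonzero `u ≥ 0`,
exists by compactness of the simplex. Since `(1 + A) ^ (n - 1)` sends nonzero nonnegative vectors
to positive ones, a vector realising `r` is a positive eigenvector; comparing `|x|` with it shows
`|λ| ≤ r` for every complex eigenvalue `λ`, and a minimal-ratio argument shows that the
`r`-eigenspace is a line. For the spectral abscissa `s` of `M`, a positive left eigenvector `w`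
gives algebraic simplicity: `w` annihilates the range of `M - s` but not the eigenvector `v`, so
`ker (M - s) ^ 2 = ker (M - s)`.
-/

open Finset Filter Topology

variable {ι : Type*} [Fintype ι]

theorem Module.End.maxGenEigenspace_eq_eigenspace_of_ker_sq_le {K V : Type*} [Field K]
    [AddCommGroup V] [Module K V] {f : Module.End K V} {s : K}
    (h : LinearMap.ker ((f - s • 1) ^ 2) ≤ LinearMap.ker (f - s • 1)) :
    f.maxGenEigenspace s = f.eigenspace s := by
  refine le_antisymm (fun x hx => ?_) eigenspace_le_maxGenEigenspace
  obtain ⟨k, hk⟩ := (mem_maxGenEigenspace f s x).1 hx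
  have hstable := ker_pow_constant (f := f - s • 1) (k := 1)
    (le_antisymm (LinearMap.ker_le_ker_comp _ _) h) k
  rw [mem_eigenspace_iff, ← sub_eq_zero]
  have : x ∈ LinearMap.ker ((f - s • 1) ^ (1 + k)) := by
    rw [LinearMap.mem_ker, pow_add, mul_apply, hk, map_zero]
  rw [← hstable, pow_one] at this
  simpa using this

theorem eq_of_mulVec_eq_smul_of_vecMul_eq_smul {K : Type*} [Field K] {M : Matrix ι ι K}
    {s s' : K} {v w : ι → K} (hv : M *ᵥ v = s • v) (hw : w ᵥ* M = s' • w) (hwv : w ⬝ᵥ v ≠ 0) :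
    s' = s := by
  have := dotProduct_mulVec w M v
  rw [hv, hw, dotProduct_smul, smul_dotProduct, smul_eq_mul, smul_eq_mul] at this
  exact (mul_right_cancel₀ hwv this).symm

theorem mulVec_nonneg_of_nonneg {A : Matrix ι ι ℝ} (hA : ∀ i j, 0 ≤ A i j) {y : ι → ℝ}
    (hy : 0 ≤ y) : 0 ≤ A *ᵥ y :=
  fun i => sum_nonneg fun j _ => mul_nonneg (hA i j) (hy j)

theorem exists_pos_smul_le {u z : ι → ℝ} (hz : ∀ i, 0 < z i) : ∃ ε > (0 : ℝ), ε • u ≤ z := by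
  have hsmall : ∀ᶠ ε in 𝓝 (0 : ℝ), ∀ i, ε * u i < z i :=
    Filter.eventually_all.2 fun i =>
      ((continuous_id.mul continuous_const).tendsto' 0 0 (by simp)).eventually
        (gt_mem_nhds (hz i))
  obtain ⟨ε, hε, hεpos⟩ := ((hsmall.filter_mono nhdsWithin_le_nhds).and
    (self_mem_nhdsWithin (s := Set.Ioi 0))).exists
  exact ⟨ε, hεpos, fun i => (hε i).le⟩

noncomputable def zeroSet (y : ι → ℝ) : Finset ι := {i | y i = 0}

@[simp]
theorem mem_zeroSet {y : ι → ℝ} {i : ι} : i ∈ zeroSet y ↔ y i = 0 := by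
  simp [zeroSet]

theorem zeroSet_ne_univ {y : ι → ℝ} (hy : y ≠ 0) : zeroSet y ≠ univ := by
  contrapose! hy
  ext i
  exact mem_zeroSet.1 (hy ▸ mem_univ i)

def collatzWielandtSet (A : Matrix ι ι ℝ) : Set ℝ :=
  {t | ∃ u : ι → ℝ, 0 ≤ u ∧ u ≠ 0 ∧ t • u ≤ A *ᵥ u}

section CollatzWielandt

variable {A : Matrix ι ι ℝ}

theorem exists_mem_stdSimplex_of_mem_collatzWielandtSet {t : ℝ}
    (ht : t ∈ collatzWielandtSet A) : ∃ u ∈ stdSimplex ℝ ι, t • u ≤ A *ᵥ u := by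
  obtain ⟨u, hu, hu0, htu⟩ := ht
  obtain ⟨i, hi⟩ := Function.ne_iff.1 hu0
  have hsum : 0 < ∑ i, u i :=
    sum_pos' (fun i _ => hu i) ⟨i, mem_univ i, (hu i).lt_of_ne' hi⟩
  refine ⟨(∑ i, u i)⁻¹ • u, ⟨fun i => mul_nonneg (inv_nonneg.2 hsum.le) (hu i), ?_⟩, ?_⟩
  · simp [← mul_sum, hsum.ne']
  · rw [mulVec_smul, smul_comm]
    exact smul_le_smul_of_nonneg_left htu (inv_nonneg.2 hsum.le)

theorem le_sum_sum_of_smul_le_mulVec (hA : ∀ i j, 0 ≤ A i j) {t : ℝ} {u : ι → ℝ}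
    (hu : u ∈ stdSimplex ℝ ι) (h : t • u ≤ A *ᵥ u) : t ≤ ∑ i, ∑ j, A i j :=
  calc t = ∑ i, t * u i := by rw [← mul_sum, hu.2, mul_one]
    _ ≤ ∑ i, (A *ᵥ u) i := sum_le_sum fun i _ => h i
    _ ≤ ∑ i, ∑ j, A i j := sum_le_sum fun i _ => sum_le_sum fun j _ =>
      mul_le_of_le_one_right (hA i j) (mem_Icc_of_mem_stdSimplex hu j).2

theorem exists_isGreatest_collatzWielandtSet [Nonempty ι] (hA : ∀ i j, 0 ≤ A i j) :
    ∃ r, IsGreatest (collatzWielandtSet A) r := by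
  classical
  set K : Set (ℝ × (ι → ℝ)) := {p | 0 ≤ p.1 ∧ p.2 ∈ stdSimplex ℝ ι ∧ p.1 • p.2 ≤ A *ᵥ p.2}
  have hK : IsCompact K := by
    have hclosed : IsClosed K :=
      (isClosed_le continuous_const continuous_fst).inter
        (((isClosed_stdSimplex ℝ ι).preimage continuous_snd).inter
          (isClosed_le (continuous_fst.smul continuous_snd)
            (continuous_const.matrix_mulVec continuous_snd)))
    refine ((isCompact_Icc (a := 0) (b := ∑ i, ∑ j, A i j)).prod
      (isCompact_stdSimplex ℝ ι)).of_isClosed_subset hclosed ?_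
    rintro ⟨t, u⟩ ⟨ht, hu, htu⟩
    exact ⟨⟨ht, le_sum_sum_of_smul_le_mulVec hA hu htu⟩, hu⟩
  obtain ⟨i⟩ := ‹Nonempty ι›
  have hKne : K.Nonempty := ⟨(0, Pi.single i 1), le_rfl, single_mem_stdSimplex ℝ i,
    by simpa using mulVec_nonneg_of_nonneg hA (Pi.single_nonneg.2 zero_le_one)⟩
  obtain ⟨⟨r, v⟩, ⟨hr, hv, hrv⟩, hmax⟩ := hK.exists_isMaxOn hKne continuous_fst.continuousOn
  refine ⟨r, ⟨v, hv.1, fun h => by simp [h, stdSimplex] at hv, hrv⟩, fun t ht => ?_⟩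
  rcases le_or_gt t 0 with ht0 | ht0
  · exact ht0.trans hr
  obtain ⟨u, hu, htu⟩ := exists_mem_stdSimplex_of_mem_collatzWielandtSet ht
  exact hmax (show (t, u) ∈ K from ⟨ht0.le, hu, htu⟩)

theorem norm_le_of_mulVec_eq_smul (hA : ∀ i j, 0 ≤ A i j) {r : ℝ}
    (hr : r ∈ upperBounds (collatzWielandtSet A)) {μ : ℂ} {x : ι → ℂ} (hx : x ≠ 0)
    (h : A.map Complex.ofReal *ᵥ x = μ • x) : ‖μ‖ ≤ r := by
  refine hr ⟨fun i => ‖x i‖, fun i => norm_nonneg _, ?_, fun i => ?_⟩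
  · contrapose! hx
    ext i
    simpa using congr_fun hx i
  · calc ‖μ‖ * ‖x i‖ = ‖(A.map Complex.ofReal *ᵥ x) i‖ := by simp [h]
      _ ≤ ∑ j, ‖(A i j : ℂ) * x j‖ := norm_sum_le _ _
      _ = (A *ᵥ fun i => ‖x i‖) i := by
        simp [mulVec, dotProduct, abs_of_nonneg (hA _ _)]

end CollatzWielandt

variable [DecidableEq ι]

theorem mem_spectrum_iff_exists_mulVec_eq_smul {K : Type*} [Field K] (N : Matrix ι ι K) (μ : K) :
    μ ∈ spectrum K N ↔ ∃ x ≠ 0, N *ᵥ x = μ • x := by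
  rw [← Matrix.spectrum_toLin', ← Module.End.hasEigenvalue_iff_mem_spectrum,
    Module.End.HasEigenvalue, Module.End.HasUnifEigenvalue, Submodule.ne_bot_iff]
  simp [and_comm]

theorem Matrix.rootMultiplicity_charpoly_eq_one_of_eigenspace_eq_span {K : Type*} [Field K]
    {M : Matrix ι ι K} {s : K} {v w : ι → K} (heig : Module.End.eigenspace (toLin' M) s = K ∙ v)
    (hwM : w ᵥ* M = s • w) (hwv : w ⬝ᵥ v ≠ 0) : M.charpoly.rootMultiplicity s = 1 := by
  have hv : v ≠ 0 := by rintro rfl; simp at hwv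
  rw [← Matrix.charpoly_toLin', ← LinearMap.finrank_maxGenEigenspace_eq,
    Module.End.maxGenEigenspace_eq_eigenspace_of_ker_sq_le, heig, finrank_span_singleton hv]
  intro x hx
  set y := (toLin' M - s • 1) x
  have hy : y ∈ Module.End.eigenspace (toLin' M) s := by
    rw [Module.End.mem_eigenspace_iff, ← sub_eq_zero]
    simpa [y, sq] using hx
  obtain ⟨t, ht⟩ := Submodule.mem_span_singleton.1 (heig ▸ hy)
  have hwy : w ⬝ᵥ y = 0 := by
    simp [y, dotProduct_sub, dotProduct_mulVec, hwM]
  rw [← ht, dotProduct_smul, smul_eq_mul, mul_eq_zero] at hwy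
  change y = 0
  rw [← ht, hwy.resolve_right hwv, zero_smul]

section Nonneg

variable {A : Matrix ι ι ℝ}

theorem le_one_add_mulVec (hA : ∀ i j, 0 ≤ A i j) {y : ι → ℝ} (hy : 0 ≤ y) :
    y ≤ (1 + A) *ᵥ y := by
  rw [add_mulVec, one_mulVec]
  exact le_add_of_nonneg_right (mulVec_nonneg_of_nonneg hA hy)

theorem le_one_add_pow_mulVec (hA : ∀ i j, 0 ≤ A i j) {y : ι → ℝ} (hy : 0 ≤ y) (k : ℕ) :
    y ≤ (1 + A) ^ k *ᵥ y := by
  induction k with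
  | zero => simp
  | succ k ih =>
    rw [pow_succ', ← mulVec_mulVec]
    exact ih.trans (le_one_add_mulVec hA (hy.trans ih))

theorem Irred.exists_mulVec_pos_of_eq_zero (hirr : Irred A) (hA : ∀ i j, 0 ≤ A i j)
    {y : ι → ℝ} (hy : 0 ≤ y) (hy0 : y ≠ 0) (hz : ∃ i, y i = 0) :
    ∃ i, y i = 0 ∧ 0 < (A *ᵥ y) i := by
  obtain ⟨i, hi, j, hj, hAij⟩ :=
    hirr _ (by simpa [Finset.Nonempty] using hz) (zeroSet_ne_univ hy0)
  rw [mem_zeroSet] at hi hj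
  refine ⟨i, hi, ?_⟩
  calc 0 < A i j * y j := mul_pos ((hA i j).lt_of_ne' hAij) ((hy j).lt_of_ne' hj)
    _ ≤ (A *ᵥ y) i :=
      single_le_sum (f := fun k => A i k * y k) (fun k _ => mul_nonneg (hA i k) (hy k))
        (mem_univ j)

theorem Irred.pos_of_mulVec_eq_smul (hirr : Irred A) (hA : ∀ i j, 0 ≤ A i j)
    {y : ι → ℝ} {r : ℝ} (hy : 0 ≤ y) (hy0 : y ≠ 0) (h : A *ᵥ y = r • y) (i : ι) :
    0 < y i := by
  by_contra! hi
  obtain ⟨j, hj, hpos⟩ := hirr.exists_mulVec_pos_of_eq_zero hA hy hy0 ⟨i, le_antisymm hi (hy i)⟩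
  simp [h, hj] at hpos

theorem Irred.card_zeroSet_one_add_mulVec_le (hirr : Irred A) (hA : ∀ i j, 0 ≤ A i j)
    {y : ι → ℝ} (hy : 0 ≤ y) (hy0 : y ≠ 0) :
    #(zeroSet ((1 + A) *ᵥ y)) ≤ #(zeroSet y) - 1 := by
  have hsub : zeroSet ((1 + A) *ᵥ y) ⊆ zeroSet y := fun i hi =>
    mem_zeroSet.2 (le_antisymm (mem_zeroSet.1 hi ▸ le_one_add_mulVec hA hy i) (hy i))
  rcases eq_empty_or_nonempty (zeroSet y) with hz | ⟨i, hi⟩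
  · simp [subset_empty.1 (hz ▸ hsub)]
  · obtain ⟨j, hj, hpos⟩ :=
      hirr.exists_mulVec_pos_of_eq_zero hA hy hy0 ⟨i, mem_zeroSet.1 hi⟩
    refine Nat.le_sub_one_of_lt (card_lt_card ⟨hsub, fun h => ?_⟩)
    have : j ∈ zeroSet ((1 + A) *ᵥ y) := h (mem_zeroSet.2 hj)
    simp [add_mulVec, hj, hpos.ne'] at this

theorem Irred.card_zeroSet_one_add_pow_mulVec_le (hirr : Irred A) (hA : ∀ i j, 0 ≤ A i j)
    (k : ℕ) {y : ι → ℝ} (hy : 0 ≤ y) (hy0 : y ≠ 0) :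
    #(zeroSet ((1 + A) ^ k *ᵥ y)) ≤ #(zeroSet y) - k := by
  induction k generalizing y with
  | zero => simp
  | succ k ih =>
    have hle := le_one_add_mulVec hA hy
    have hy1 : (1 + A) *ᵥ y ≠ 0 := fun h => hy0 (le_antisymm (h ▸ hle) hy)
    rw [pow_succ, ← mulVec_mulVec]
    grw [ih (hy.trans hle) hy1, hirr.card_zeroSet_one_add_mulVec_le hA hy hy0]
    omega

theorem Irred.one_add_pow_mulVec_pos (hirr : Irred A) (hA : ∀ i j, 0 ≤ A i j)
    {y : ι → ℝ} (hy : 0 ≤ y) (hy0 : y ≠ 0) (i : ι) :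
    0 < ((1 + A) ^ (Fintype.card ι - 1) *ᵥ y) i := by
  have hcard := hirr.card_zeroSet_one_add_pow_mulVec_le hA (Fintype.card ι - 1) hy hy0
  have hlt : #(zeroSet y) < Fintype.card ι := (card_lt_iff_ne_univ _).2 (zeroSet_ne_univ hy0)
  have hempty : zeroSet ((1 + A) ^ (Fintype.card ι - 1) *ᵥ y) = ∅ := card_eq_zero.1 (by omega)
  refine (hy.trans (le_one_add_pow_mulVec hA hy _) i).lt_of_ne' fun hi => ?_
  simpa [hempty] using mem_zeroSet.2 hi

theorem Irred.exists_pos_eigenvector_of_isGreatest (hirr : Irred A) (hA : ∀ i j, 0 ≤ A i j)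
    {r : ℝ} (hr : IsGreatest (collatzWielandtSet A) r) :
    ∃ v, (∀ i, 0 < v i) ∧ A *ᵥ v = r • v := by
  obtain ⟨v, hv, hv0, hrv⟩ := hr.1
  suffices heig : A *ᵥ v = r • v from ⟨v, hirr.pos_of_mulVec_eq_smul hA hv hv0 heig, heig⟩
  by_contra hne
  -- `B` makes the nonzero defect `A v - r • v ≥ 0` positive, which leaves room to raise `r`.
  set B := (1 + A) ^ (Fintype.card ι - 1)
  set w := A *ᵥ v - r • v
  have hBv := hirr.one_add_pow_mulVec_pos hA hv hv0
  have hBw := hirr.one_add_pow_mulVec_pos hA (sub_nonneg.2 hrv) (sub_ne_zero.2 hne)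
  obtain ⟨ε, hε, hεBv⟩ := exists_pos_smul_le (u := B *ᵥ v) hBw
  have hcomm : B * A = A * B := ((Commute.one_left A).add_left (Commute.refl A)).pow_left _
  obtain ⟨i, -⟩ := Function.ne_iff.1 hv0
  have hmem : r + ε ∈ collatzWielandtSet A := by
    refine ⟨B *ᵥ v, fun i => (hBv i).le, fun h => (hBv i).ne' (congr_fun h i), ?_⟩
    calc (r + ε) • (B *ᵥ v) = r • (B *ᵥ v) + ε • (B *ᵥ v) := add_smul _ _ _
      _ ≤ r • (B *ᵥ v) + B *ᵥ w := by gcongr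
      _ = A *ᵥ (B *ᵥ v) := by
        simp only [w, mulVec_sub, mulVec_smul, mulVec_mulVec, hcomm]
        abel
  linarith [hr.2 hmem]

theorem Irred.exists_smul_eq_of_mulVec_eq_smul [Nonempty ι] (hirr : Irred A)
    (hA : ∀ i j, 0 ≤ A i j) {r : ℝ} {v : ι → ℝ} (hv : ∀ i, 0 < v i) (hAv : A *ᵥ v = r • v)
    {x : ι → ℝ} (hx : A *ᵥ x = r • x) : ∃ t : ℝ, t • v = x := by
  obtain ⟨i₀, -, hi₀⟩ := exists_min_image univ (fun i => x i / v i) univ_nonempty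
  set y := x - (x i₀ / v i₀) • v
  have hy : 0 ≤ y := fun i => by
    have := hi₀ i (mem_univ i)
    rw [le_div_iff₀ (hv i)] at this
    simpa [y] using this
  have hyi₀ : y i₀ = 0 := by simp [y, div_mul_cancel₀ _ (hv i₀).ne']
  have hAy : A *ᵥ y = r • y := by
    simp only [y, mulVec_sub, mulVec_smul, hx, hAv, smul_sub, smul_comm r]
  by_cases hy0 : y = 0
  · exact ⟨_, (sub_eq_zero.1 hy0).symm⟩
  · exact ((hirr.pos_of_mulVec_eq_smul hA hy hy0 hAy i₀).ne' hyi₀).elim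

end Nonneg

section Metzler

variable {M : Matrix ι ι ℝ}

theorem Metzler.exists_nonneg_add_smul_one (hM : Metzler M) :
    ∃ c : ℝ, ∀ i j, 0 ≤ (M + c • 1) i j := by
  refine ⟨∑ i, |M i i|, fun i j => ?_⟩
  rcases eq_or_ne i j with rfl | hij
  · have := single_le_sum (f := fun k => |M k k|) (fun k _ => abs_nonneg _) (mem_univ i)
    simp only [Matrix.add_apply, Matrix.smul_apply, one_apply_eq, smul_eq_mul, mul_one]
    linarith [neg_abs_le (M i i)]
  · simpa [hij] using hM i j hij

theorem Irred.add_smul_one (hirr : Irred M) (c : ℝ) : Irred (M + c • 1) := by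
  intro S hS hSu
  obtain ⟨i, hi, j, hj, hij⟩ := hirr S hS hSu
  exact ⟨i, hi, j, hj, by simpa [show i ≠ j from fun h => hj (h ▸ hi)] using hij⟩

theorem Metzler.transpose (hM : Metzler M) : Metzler Mᵀ :=
  fun i j hij => hM j i hij.symm

theorem Irred.transpose (hirr : Irred M) : Irred Mᵀ := by
  intro S hS hSu
  obtain ⟨i, hi, j, hj, hij⟩ := hirr Sᶜ
    (nonempty_iff_ne_empty.2 (by rwa [Ne, compl_eq_empty_iff]))
    ((compl_ne_univ_iff_nonempty S).2 hS)
  exact ⟨j, by simpa using hj, i, by simpa using hi, hij⟩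

theorem ofReal_mem_spectrum_map_ofReal {s : ℝ} {v : ι → ℝ} (hv : v ≠ 0)
    (h : M *ᵥ v = s • v) : (s : ℂ) ∈ spectrum ℂ (M.map Complex.ofReal) := by
  refine (mem_spectrum_iff_exists_mulVec_eq_smul _ _).2 ⟨Complex.ofReal ∘ v, ?_, ?_⟩
  · contrapose! hv
    ext i
    simpa using congr_fun hv i
  · ext i
    simpa [mulVec, dotProduct] using congr_arg Complex.ofReal (congr_fun h i)

theorem re_add_le_of_mem_spectrum {c r : ℝ} (hA : ∀ i j, 0 ≤ (M + c • 1) i j)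
    (hr : r ∈ upperBounds (collatzWielandtSet (M + c • 1))) {μ : ℂ}
    (hμ : μ ∈ spectrum ℂ (M.map Complex.ofReal)) : μ.re + c ≤ r := by
  obtain ⟨x, hx, hMx⟩ := (mem_spectrum_iff_exists_mulVec_eq_smul _ _).1 hμ
  have hmap : (M + c • 1).map Complex.ofReal = M.map Complex.ofReal + (c : ℂ) • 1 := by
    ext i j
    by_cases h : i = j <;> simp [h]
  have hAx : (M + c • 1).map Complex.ofReal *ᵥ x = (μ + c) • x := by
    rw [hmap, add_mulVec, smul_mulVec, one_mulVec, hMx, add_smul]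
  calc μ.re + c = (μ + c).re := by simp
    _ ≤ ‖μ + c‖ := Complex.re_le_norm _
    _ ≤ r := norm_le_of_mulVec_eq_smul hA hr hx hAx

theorem spectralAbscissa_eq_of_forall_re_le {s : ℝ}
    (hs : (s : ℂ) ∈ spectrum ℂ (M.map Complex.ofReal))
    (hle : ∀ μ ∈ spectrum ℂ (M.map Complex.ofReal), μ.re ≤ s) : spectralAbscissa M = s :=
  IsGreatest.csSup_eq ⟨⟨s, hs, by simp⟩, by rintro _ ⟨μ, hμ, rfl⟩; exact hle μ hμ⟩

theorem Metzler.exists_pos_eigenvector [Nonempty ι] (hM : Metzler M) (hirr : Irred M) :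
    ∃ v, (∀ i, 0 < v i) ∧ M *ᵥ v = spectralAbscissa M • v ∧
      Module.End.eigenspace (toLin' M) (spectralAbscissa M) = ℝ ∙ v := by
  obtain ⟨c, hA⟩ := hM.exists_nonneg_add_smul_one
  have hirrA := hirr.add_smul_one c
  obtain ⟨r, hr⟩ := exists_isGreatest_collatzWielandtSet hA
  obtain ⟨v, hv, hAv⟩ := hirrA.exists_pos_eigenvector_of_isGreatest hA hr
  have hshift : ∀ x : ι → ℝ, M *ᵥ x = (r - c) • x ↔ (M + c • 1) *ᵥ x = r • x := fun x => by
    rw [add_mulVec, smul_mulVec, one_mulVec, sub_smul, eq_sub_iff_add_eq]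
  have hv0 : v ≠ 0 := fun h => (hv (Classical.arbitrary ι)).ne' (congr_fun h _)
  have hMv : M *ᵥ v = (r - c) • v := (hshift v).2 hAv
  have hs : spectralAbscissa M = r - c :=
    spectralAbscissa_eq_of_forall_re_le (ofReal_mem_spectrum_map_ofReal hv0 hMv)
      fun μ hμ => by linarith [re_add_le_of_mem_spectrum hA hr.2 hμ]
  refine ⟨v, hv, hs ▸ hMv, ?_⟩
  ext x
  rw [Module.End.mem_eigenspace_iff, toLin'_apply, Submodule.mem_span_singleton, hs, hshift]
  refine ⟨hirrA.exists_smul_eq_of_mulVec_eq_smul hA hv hAv, ?_⟩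
  rintro ⟨t, rfl⟩
  rw [mulVec_smul, hAv, smul_comm]

end Metzler

/-- For an irreducible Metzler matrix, the spectral abscissa is a simple eigenvalue with a
strictly positive eigenvector. -/
theorem metzler_perron {n : ℕ} (hn : 0 < n) (M : Matrix (Fin n) (Fin n) ℝ)
    (hMetz : Metzler M) (hirr : Irred M) :
    Polynomial.rootMultiplicity (spectralAbscissa M) M.charpoly = 1 ∧
    ∃ v : Fin n → ℝ, (∀ i, 0 < v i) ∧ M.mulVec v = spectralAbscissa M • v := by
  have : Nonempty (Fin n) := ⟨⟨0, hn⟩⟩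
  obtain ⟨v, hv, hMv, heig⟩ := hMetz.exists_pos_eigenvector hirr
  obtain ⟨w, hw, hMw, -⟩ := hMetz.transpose.exists_pos_eigenvector hirr.transpose
  rw [mulVec_transpose] at hMw
  have hwv : w ⬝ᵥ v ≠ 0 := (sum_pos (fun i _ => mul_pos (hw i) (hv i)) univ_nonempty).ne'
  rw [eq_of_mulVec_eq_smul_of_vecMul_eq_smul hMv hMw hwv] at hMw
  exact ⟨rootMultiplicity_charpoly_eq_one_of_eigenspace_eq_span heig hMw hwv, v, hv, hMv⟩
end

section
/- In the bi-virus SIWS model with B_w¹, B_w² irreducible nonnegative, D_w¹, D_w² positive diagonal, s(B_w¹ − D_w¹) > 0, s(B_w² − D_w²) > 0, and (D_w¹)⁻¹B_w¹ > (D_w²)⁻¹B_w², there exists no coexisting equilibrium: there is no pair (ŷ¹, ŷ²) with ŷ¹ ≫ 0, ŷ² ≫ 0, ŷ¹ + ŷ² ≪ 1 satisfying (I − X(ŷ¹) − X(ŷ²))(D_wᵏ)⁻¹B_wᵏ ŷᵏ = ŷᵏ for k = 1, 2. -/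
open Matrix

/-- Index type for the SIWS model: n population nodes plus the shared resource. -/
abbrev Idx (n : ℕ) := Fin n ⊕ Unit

/-- X(y) = diag(y₁,…,yₙ,0): the diagonal matrix of the population coordinates of y,
with the resource coordinate set to zero. -/
noncomputable def Xmat {n : ℕ} (y : Idx n → ℝ) : Matrix (Idx n) (Idx n) ℝ :=
  Matrix.diagonal (Sum.elim (fun i => y (Sum.inl i)) fun _ => 0)

/-- The SIWS spread matrix B_w = [[B, b],[δ_w c, 0]]. -/
def mkBw {n : ℕ} (B : Matrix (Fin n) (Fin n) ℝ) (b c : Fin n → ℝ) (dw : ℝ) :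
    Matrix (Idx n) (Idx n) ℝ :=
  Matrix.of fun i j =>
    match i, j with
    | Sum.inl i, Sum.inl j => B i j
    | Sum.inl i, Sum.inr _ => b i
    | Sum.inr _, Sum.inl j => dw * c j
    | Sum.inr _, Sum.inr _ => 0

/-- The SIWS healing-rate matrix D_w = diag(δ₁,…,δₙ,δ_w). -/
noncomputable def mkDw {n : ℕ} (d : Fin n → ℝ) (dw : ℝ) : Matrix (Idx n) (Idx n) ℝ :=
  Matrix.diagonal (Sum.elim d fun _ => dw)

/-- Membership in the sensible domain D: every infection fraction in [0,1] and the
resource contamination nonnegative. -/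
def memD {n m : ℕ} (y : Fin m → Idx n → ℝ) : Prop :=
  ∀ k, (∀ i : Fin n, y k (Sum.inl i) ∈ Set.Icc (0:ℝ) 1) ∧ 0 ≤ y k (Sum.inr ())


open Finset

/-!
Rescale both equilibrium equations by the common positive diagonal `S = I - X(ŷ¹) - X(ŷ²)`, so
that `ŷ²` is a fixed point of `M = S (D_w²)⁻¹B_w²` and `ŷ¹` one of `M' = S (D_w¹)⁻¹B_w¹ ≥ M`.
Let `c` be the largest ratio `ŷ²ⱼ / ŷ¹ⱼ`. In a row `i` where it is attained,
`ŷ²ᵢ = (M ŷ²)ᵢ ≤ (M (c ŷ¹))ᵢ ≤ (M' (c ŷ¹))ᵢ = c ŷ¹ᵢ = ŷ²ᵢ`, so row `i` of `M` equals row `i` of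
`M'` and the ratio is again `c` at every out-neighbour of `i` in the graph of `M`. By
irreducibility the ratio is `c` everywhere, hence `M = M'`, contradicting strict dominance.
-/

section

variable {α : Type*} [Fintype α]

theorem Irred.of_ne_zero_imp [DecidableEq α] {M N : Matrix α α ℝ} (hM : Irred M)
    (hMN : ∀ i j, M i j ≠ 0 → N i j ≠ 0) : Irred N := fun S hS hSu => by
  obtain ⟨i, hi, j, hj, hij⟩ := hM S hS hSu
  exact ⟨i, hi, j, hj, hMN i j hij⟩

theorem Irred.forall_of_closed [DecidableEq α] {M : Matrix α α ℝ} (hM : Irred M)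
    {P : α → Prop} {i₀ : α} (h₀ : P i₀) (hclosed : ∀ i j, P i → M i j ≠ 0 → P j) : ∀ i, P i := by
  classical
  have hS : univ.filter P = univ := by
    by_contra hS
    obtain ⟨i, hi, j, hj, hij⟩ := hM _ ⟨i₀, mem_filter.2 ⟨mem_univ _, h₀⟩⟩ hS
    exact hj (mem_filter.2 ⟨mem_univ _, hclosed i j (mem_filter.1 hi).2 hij⟩)
  intro i
  exact (mem_filter.1 (hS ▸ mem_univ i)).2

theorem row_eq_of_mulVec_eq_self_of_le {M M' : Matrix α α ℝ} (hM : ∀ i j, 0 ≤ M i j)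
    (hle : ∀ i j, M i j ≤ M' i j) {x y : α → ℝ} (hx : M' *ᵥ x = x) (hy : M *ᵥ y = y)
    {c : ℝ} (hcx : ∀ j, 0 < c * x j) (hyx : ∀ j, y j ≤ c * x j) {i : α} (hi : y i = c * x i) :
    ∀ j, M i j = M' i j ∧ (M i j ≠ 0 → y j = c * x j) := by
  have hMy j : M i j * y j ≤ M i j * (c * x j) := mul_le_mul_of_nonneg_left (hyx j) (hM i j)
  have hM'x j : M i j * (c * x j) ≤ M' i j * (c * x j) :=
    mul_le_mul_of_nonneg_right (hle i j) (hcx j).le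
  have hsum : ∑ j, M i j * y j = ∑ j, M' i j * (c * x j) :=
    calc ∑ j, M i j * y j = y i := congrFun hy i
      _ = c * (M' *ᵥ x) i := by rw [hx, hi]
      _ = ∑ j, M' i j * (c * x j) := by
        simp only [mulVec, dotProduct, mul_sum, mul_left_comm]
  have hterm := (sum_eq_sum_iff_of_le fun j _ => (hMy j).trans (hM'x j)).1 hsum
  intro j
  have hj := hterm j (mem_univ j)
  exact ⟨mul_right_cancel₀ (hcx j).ne' (by linarith [hMy j, hM'x j]),
    fun hne => mul_left_cancel₀ hne (by linarith [hMy j, hM'x j])⟩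

theorem Irred.eq_of_le_of_mulVec_eq_self [DecidableEq α] {M M' : Matrix α α ℝ} (hirr : Irred M)
    (hM : ∀ i j, 0 ≤ M i j) (hle : ∀ i j, M i j ≤ M' i j) {x y : α → ℝ}
    (hx_pos : ∀ i, 0 < x i) (hy_pos : ∀ i, 0 < y i) (hx : M' *ᵥ x = x) (hy : M *ᵥ y = y) :
    M = M' := by
  rcases isEmpty_or_nonempty α with hα | hα
  · exact Subsingleton.elim _ _
  obtain ⟨i₀, hi₀⟩ := Finite.exists_max fun j => y j / x j
  set c := y i₀ / x i₀
  have hcx j : 0 < c * x j := mul_pos (div_pos (hy_pos i₀) (hx_pos i₀)) (hx_pos j)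
  have hyx j : y j ≤ c * x j := (div_le_iff₀ (hx_pos j)).1 (hi₀ j)
  have hrow {i} (hi : y i = c * x i) := row_eq_of_mulVec_eq_self_of_le hM hle hx hy hcx hyx hi
  have hall : ∀ i, y i = c * x i :=
    hirr.forall_of_closed (div_mul_cancel₀ _ (hx_pos i₀).ne').symm
      fun i j hi hij => (hrow hi j).2 hij
  ext i j
  exact (hrow (hall i) j).1

theorem inv_diagonal_mul_apply [DecidableEq α] {d : α → ℝ}
    (hd : ∀ i, d i ≠ 0) (B : Matrix α α ℝ) (i j : α) :
    ((diagonal d)⁻¹ * B) i j = (d i)⁻¹ * B i j := by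
  have hinv : (diagonal d)⁻¹ = diagonal fun i => (d i)⁻¹ := by
    apply inv_eq_right_inv
    simp [diagonal_mul_diagonal, hd]
  rw [hinv, diagonal_mul]

end

theorem one_sub_Xmat_sub_Xmat {n : ℕ} (y1 y2 : Idx n → ℝ) :
    1 - Xmat y1 - Xmat y2 =
      diagonal (Sum.elim (fun i => 1 - y1 (.inl i) - y2 (.inl i)) fun _ => 1) := by
  rw [Xmat, Xmat, ← diagonal_one, diagonal_sub, diagonal_sub]
  congr 1
  ext (i | i) <;> simp

theorem siws_no_coexisting_equilibrium_general {n : ℕ}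
    (Bw1 Bw2 : Matrix (Idx n) (Idx n) ℝ)
    (hBw2 : ∀ i j, 0 ≤ Bw2 i j)
    (hirr2 : Irred Bw2)
    (dv1 dv2 : Idx n → ℝ) (hdv2 : ∀ i, 0 < dv2 i)
    (hord : ∀ i j, ((Matrix.diagonal dv2)⁻¹ * Bw2) i j ≤ ((Matrix.diagonal dv1)⁻¹ * Bw1) i j)
    (hne : (Matrix.diagonal dv1)⁻¹ * Bw1 ≠ (Matrix.diagonal dv2)⁻¹ * Bw2) :
    ¬∃ y1 y2 : Idx n → ℝ, (∀ i, 0 < y1 i) ∧ (∀ i, 0 < y2 i) ∧ (∀ i, y1 i + y2 i < 1) ∧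
      ((1 - Xmat y1 - Xmat y2) * ((Matrix.diagonal dv1)⁻¹ * Bw1)).mulVec y1 = y1 ∧
      ((1 - Xmat y1 - Xmat y2) * ((Matrix.diagonal dv2)⁻¹ * Bw2)).mulVec y2 = y2 := by
  rintro ⟨y1, y2, hy1, hy2, h12, he1, he2⟩
  have hA2 := inv_diagonal_mul_apply (fun i => (hdv2 i).ne') Bw2
  set s : Idx n → ℝ := Sum.elim (fun i => 1 - y1 (.inl i) - y2 (.inl i)) fun _ => 1
  have hs : ∀ i, 0 < s i := by
    rintro (i | i)
    · simpa [s, sub_sub, sub_pos] using h12 (.inl i)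
    · exact one_pos
  rw [one_sub_Xmat_sub_Xmat] at he1 he2
  have hsA : diagonal s * ((diagonal dv2)⁻¹ * Bw2) = diagonal s * ((diagonal dv1)⁻¹ * Bw1) := by
    refine (hirr2.of_ne_zero_imp fun i j hij => ?_).eq_of_le_of_mulVec_eq_self
      (fun i j => ?_) (fun i j => ?_) hy1 hy2 he1 he2
    · rw [diagonal_mul, hA2]
      exact mul_ne_zero (hs i).ne' (mul_ne_zero (inv_ne_zero (hdv2 i).ne') hij)
    · rw [diagonal_mul, hA2]
      exact mul_nonneg (hs i).le (mul_nonneg (inv_nonneg.2 (hdv2 i).le) (hBw2 i j))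
    · simp only [diagonal_mul]
      exact mul_le_mul_of_nonneg_left (hord i j) (hs i).le
  refine hne (ext fun i j => (mul_left_cancel₀ (hs i).ne' ?_).symm)
  simpa only [diagonal_mul] using congrFun₂ hsA i j

/-- If virus 1 strictly dominates virus 2 in the bi-virus SIWS model, then no coexisting
equilibrium exists. -/
theorem siws_no_coexisting_equilibrium {n : ℕ}
    (Bw1 Bw2 : Matrix (Idx n) (Idx n) ℝ)
    (hBw1 : ∀ i j, 0 ≤ Bw1 i j) (hBw2 : ∀ i j, 0 ≤ Bw2 i j)
    (hirr1 : Irred Bw1) (hirr2 : Irred Bw2)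
    (dv1 dv2 : Idx n → ℝ) (hdv1 : ∀ i, 0 < dv1 i) (hdv2 : ∀ i, 0 < dv2 i)
    (hs1 : 0 < spectralAbscissa (Bw1 - Matrix.diagonal dv1))
    (hs2 : 0 < spectralAbscissa (Bw2 - Matrix.diagonal dv2))
    (hord : ∀ i j, ((Matrix.diagonal dv2)⁻¹ * Bw2) i j ≤ ((Matrix.diagonal dv1)⁻¹ * Bw1) i j)
    (hne : (Matrix.diagonal dv1)⁻¹ * Bw1 ≠ (Matrix.diagonal dv2)⁻¹ * Bw2) :
    ¬∃ y1 y2 : Idx n → ℝ, (∀ i, 0 < y1 i) ∧ (∀ i, 0 < y2 i) ∧ (∀ i, y1 i + y2 i < 1) ∧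
      ((1 - Xmat y1 - Xmat y2) * ((Matrix.diagonal dv1)⁻¹ * Bw1)).mulVec y1 = y1 ∧
      ((1 - Xmat y1 - Xmat y2) * ((Matrix.diagonal dv2)⁻¹ * Bw2)).mulVec y2 = y2 :=
  siws_no_coexisting_equilibrium_general Bw1 Bw2 hBw2 hirr2 dv1 dv2 hdv2 hord hne
end
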